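/- Let T be a nondegenerate triangle in ℝ² and let t ∈ B(T) be a child of T. Then exactly one of the six triangles in B(t) is special with respect to T, i.e., exactly one child of t has a side contained in ∂T and has a vertex which is a vertex of T. -/
import Mathlib


/-- A point of the plane. -/
abbrev Pt := ℝ × ℝ

/-- A triangle in the plane: an ordered triple of points. -/
structure Triangle where
  v : Fin 3 → Pt

/-- A triangle is nondegenerate if its vertices are affinely independent. -/
def Triangle.Nondeg (T : Triangle) : Prop := AffineIndependent ℝ T.v

/-- The barycenter of a triangle. -/
noncomputable def Triangle.bary (T : Triangle) : Pt :=
  (3 : ℝ)⁻¹ • (T.v 0 + T.v 1 + T.v 2)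

/-- The child `[aᵢ, (aᵢ+aⱼ)/2, b]` of a triangle produced by barycentric subdivision. -/
noncomputable def Triangle.child (T : Triangle) (i j : Fin 3) : Triangle :=
  ⟨![T.v i, (2 : ℝ)⁻¹ • (T.v i + T.v j), T.bary]⟩

/-- The barycentric subdivision of a triangle: the set of its six children. -/
noncomputable def BSub (T : Triangle) : Set Triangle :=
  {t | ∃ i j : Fin 3, i ≠ j ∧ t = T.child i j}

/-- `n`-fold iterated barycentric subdivision `Bⁿ(T₀)`. -/
noncomputable def BIter (T₀ : Triangle) : ℕ → Set Triangle
  | 0 => {T₀}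
  | n + 1 => ⋃ t ∈ BIter T₀ n, BSub t

/-- The set of sides of a triangle (as subsets of the plane). -/
def Triangle.sides (T : Triangle) : Set (Set Pt) :=
  {e | ∃ i j : Fin 3, i ≠ j ∧ e = segment ℝ (T.v i) (T.v j)}

/-- The boundary of a triangle: the union of its three sides. -/
def Triangle.bdry (T : Triangle) : Set Pt :=
  segment ℝ (T.v 0) (T.v 1) ∪ segment ℝ (T.v 1) (T.v 2) ∪ segment ℝ (T.v 0) (T.v 2)

/-- Two triangles are adjacent if they are distinct and share a common side. -/
def Adjacent (s t : Triangle) : Prop := s ≠ t ∧ ∃ e, e ∈ s.sides ∧ e ∈ t.sides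

/-- An offspring triangle `u` is special with respect to `T` if one of its sides is
contained in `∂T` and one of its vertices is a vertex of `T`. -/
def SpecialWrt (T u : Triangle) : Prop :=
  (∃ e ∈ u.sides, e ⊆ T.bdry) ∧ ∃ i j : Fin 3, u.v i = T.v j

/- auxiliary lemmas -/


lemma coords_eq (T : Triangle) (hT : T.Nondeg) {c0 c1 c2 d0 d1 d2 : ℝ}
    (hc : c0 + c1 + c2 = 1) (hd : d0 + d1 + d2 = 1)
    (h : c0 • T.v 0 + c1 • T.v 1 + c2 • T.v 2 = d0 • T.v 0 + d1 • T.v 1 + d2 • T.v 2) :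
    c0 = d0 ∧ c1 = d1 ∧ c2 = d2 := by
  have key := affineIndependent_iff.1 hT Finset.univ ![c0 - d0, c1 - d1, c2 - d2]
    (by simp [Fin.sum_univ_three]; linarith)
    (by
      simp only [Fin.sum_univ_three, Matrix.cons_val_zero, Matrix.cons_val_one, Matrix.head_cons,
        Matrix.cons_val_two, Matrix.tail_cons]
      rw [show (0:Pt) = (c0 • T.v 0 + c1 • T.v 1 + c2 • T.v 2)
          - (d0 • T.v 0 + d1 • T.v 1 + d2 • T.v 2) by rw [h]; abel]
      module)
  have h0 := key 0 (Finset.mem_univ _)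
  have h1 := key 1 (Finset.mem_univ _)
  have h2 := key 2 (Finset.mem_univ _)
  simp at h0 h1 h2
  exact ⟨by linarith, by linarith, by linarith⟩

/-- A point with all barycentric coordinates positive is not on the boundary. -/
lemma not_bdry (T : Triangle) (hT : T.Nondeg) {c0 c1 c2 : ℝ} {x : Pt}
    (h0 : 0 < c0) (h1 : 0 < c1) (h2 : 0 < c2) (hs : c0 + c1 + c2 = 1)
    (hx : x = c0 • T.v 0 + c1 • T.v 1 + c2 • T.v 2) (hmem : x ∈ T.bdry) : False := by
  rcases hmem with (h | h) | h
  · obtain ⟨s, r, hs', hr', hsr, heq⟩ := h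
    have := coords_eq T hT hs (show s + r + (0:ℝ) = 1 by linarith)
      (by rw [← hx, ← heq]; module)
    linarith [this.2.2]
  · obtain ⟨s, r, hs', hr', hsr, heq⟩ := h
    have := coords_eq T hT hs (show (0:ℝ) + s + r = 1 by linarith)
      (by rw [← hx, ← heq]; module)
    linarith [this.1]
  · obtain ⟨s, r, hs', hr', hsr, heq⟩ := h
    have := coords_eq T hT hs (show s + (0:ℝ) + r = 1 by linarith)
      (by rw [← hx, ← heq]; module)
    linarith [this.2.1]

/-- A point with all barycentric coordinates `< 1` is not a vertex. -/
lemma not_vertex (T : Triangle) (hT : T.Nondeg) {c0 c1 c2 : ℝ} {x : Pt}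
    (hs : c0 + c1 + c2 = 1) (h0 : c0 < 1) (h1 : c1 < 1) (h2 : c2 < 1)
    (hx : x = c0 • T.v 0 + c1 • T.v 1 + c2 • T.v 2) (q : Fin 3) (hq : x = T.v q) : False := by
  fin_cases q
  · have := coords_eq T hT hs (show (1:ℝ) + 0 + 0 = 1 by norm_num)
      (by rw [← hx, hq]; show T.v 0 = _; module)
    linarith [this.1]
  · have := coords_eq T hT hs (show (0:ℝ) + 1 + 0 = 1 by norm_num)
      (by rw [← hx, hq]; show T.v 1 = _; module)
    linarith [this.2.1]
  · have := coords_eq T hT hs (show (0:ℝ) + 0 + 1 = 1 by norm_num)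
      (by rw [← hx, hq]; show T.v 2 = _; module)
    linarith [this.2.2]

lemma key (T : Triangle) (hT : T.Nondeg) :
    ∃! u : Triangle, u ∈ BSub (T.child 0 1) ∧ SpecialWrt T u := by
  refine ⟨(T.child 0 1).child 0 1, ⟨⟨0, 1, by decide, rfl⟩,
    ⟨segment ℝ (((T.child 0 1).child 0 1).v 0) (((T.child 0 1).child 0 1).v 1),
      ⟨0, 1, by decide, rfl⟩, ?_⟩, 0, 0, ?_⟩, ?_⟩
  · have hsub : segment ℝ (T.v 0) (T.v 1) ⊆ T.bdry := fun x hx => Or.inl (Or.inl hx)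
    refine subset_trans ?_ hsub
    have h0 : ((T.child 0 1).child 0 1).v 0 ∈ segment ℝ (T.v 0) (T.v 1) := by
      have h : ((T.child 0 1).child 0 1).v 0 = T.v 0 := by simp [Triangle.child]
      rw [h]; exact left_mem_segment ℝ _ _
    have h1 : ((T.child 0 1).child 0 1).v 1 ∈ segment ℝ (T.v 0) (T.v 1) := by
      refine ⟨3/4, 1/4, by norm_num, by norm_num, by norm_num, ?_⟩
      simp [Triangle.child, Triangle.bary]; try module
    exact (convex_segment _ _).segment_subset h0 h1
  · simp [Triangle.child]
  · rintro u' ⟨⟨k, l, hkl, rfl⟩, ⟨e, he, hesub⟩, p, q, hv⟩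
    fin_cases k <;> fin_cases l <;> simp only [] at hkl ⊢
    · exact absurd rfl hkl
    · rfl
    · -- (0,2) : side contradiction
      exfalso
      obtain ⟨p', q', hpq', rfl⟩ := he
      fin_cases p' <;> fin_cases q'
      · exact absurd rfl hpq'
      · exact not_bdry T hT (c0 := 2/3) (c1 := 1/6) (c2 := 1/6)
          (by norm_num) (by norm_num) (by norm_num) (by norm_num)
          (by simp [Triangle.child, Triangle.bary]; try module)
          (hesub (right_mem_segment ℝ _ _))
      · exact not_bdry T hT (c0 := 11/18) (c1 := 5/18) (c2 := 2/18)
          (by norm_num) (by norm_num) (by norm_num) (by norm_num)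
          (by simp [Triangle.child, Triangle.bary]; try module)
          (hesub (right_mem_segment ℝ _ _))
      · exact not_bdry T hT (c0 := 2/3) (c1 := 1/6) (c2 := 1/6)
          (by norm_num) (by norm_num) (by norm_num) (by norm_num)
          (by simp [Triangle.child, Triangle.bary]; try module)
          (hesub (left_mem_segment ℝ _ _))
      · exact absurd rfl hpq'
      · exact not_bdry T hT (c0 := 2/3) (c1 := 1/6) (c2 := 1/6)
          (by norm_num) (by norm_num) (by norm_num) (by norm_num)
          (by simp [Triangle.child, Triangle.bary]; try module)
          (hesub (left_mem_segment ℝ _ _))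
      · exact not_bdry T hT (c0 := 11/18) (c1 := 5/18) (c2 := 2/18)
          (by norm_num) (by norm_num) (by norm_num) (by norm_num)
          (by simp [Triangle.child, Triangle.bary]; try module)
          (hesub (left_mem_segment ℝ _ _))
      · exact not_bdry T hT (c0 := 2/3) (c1 := 1/6) (c2 := 1/6)
          (by norm_num) (by norm_num) (by norm_num) (by norm_num)
          (by simp [Triangle.child, Triangle.bary]; try module)
          (hesub (right_mem_segment ℝ _ _))
      · exact absurd rfl hpq'
    · -- (1,0) : vertex contradiction
      exfalso
      fin_cases p
      · exact not_vertex T hT (c0 := 1/2) (c1 := 1/2) (c2 := 0)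
          (by norm_num) (by norm_num) (by norm_num) (by norm_num)
          (by simp [Triangle.child, Triangle.bary]; try module) q hv
      · exact not_vertex T hT (c0 := 3/4) (c1 := 1/4) (c2 := 0)
          (by norm_num) (by norm_num) (by norm_num) (by norm_num)
          (by simp [Triangle.child, Triangle.bary]; try module) q hv
      · exact not_vertex T hT (c0 := 11/18) (c1 := 5/18) (c2 := 2/18)
          (by norm_num) (by norm_num) (by norm_num) (by norm_num)
          (by simp [Triangle.child, Triangle.bary]; try module) q hv
    · exact absurd rfl hkl
    · -- (1,2)
      exfalso
      fin_cases p
      · exact not_vertex T hT (c0 := 1/2) (c1 := 1/2) (c2 := 0)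
          (by norm_num) (by norm_num) (by norm_num) (by norm_num)
          (by simp [Triangle.child, Triangle.bary]; try module) q hv
      · exact not_vertex T hT (c0 := 5/12) (c1 := 5/12) (c2 := 1/6)
          (by norm_num) (by norm_num) (by norm_num) (by norm_num)
          (by simp [Triangle.child, Triangle.bary]; try module) q hv
      · exact not_vertex T hT (c0 := 11/18) (c1 := 5/18) (c2 := 2/18)
          (by norm_num) (by norm_num) (by norm_num) (by norm_num)
          (by simp [Triangle.child, Triangle.bary]; try module) q hv
    · -- (2,0)
      exfalso
      fin_cases p
      · exact not_vertex T hT (c0 := 1/3) (c1 := 1/3) (c2 := 1/3)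
          (by norm_num) (by norm_num) (by norm_num) (by norm_num)
          (by simp [Triangle.child, Triangle.bary]; try module) q hv
      · exact not_vertex T hT (c0 := 2/3) (c1 := 1/6) (c2 := 1/6)
          (by norm_num) (by norm_num) (by norm_num) (by norm_num)
          (by simp [Triangle.child, Triangle.bary]; try module) q hv
      · exact not_vertex T hT (c0 := 11/18) (c1 := 5/18) (c2 := 2/18)
          (by norm_num) (by norm_num) (by norm_num) (by norm_num)
          (by simp [Triangle.child, Triangle.bary]; try module) q hv
    · -- (2,1)
      exfalso
      fin_cases p
      · exact not_vertex T hT (c0 := 1/3) (c1 := 1/3) (c2 := 1/3)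
          (by norm_num) (by norm_num) (by norm_num) (by norm_num)
          (by simp [Triangle.child, Triangle.bary]; try module) q hv
      · exact not_vertex T hT (c0 := 5/12) (c1 := 5/12) (c2 := 1/6)
          (by norm_num) (by norm_num) (by norm_num) (by norm_num)
          (by simp [Triangle.child, Triangle.bary]; try module) q hv
      · exact not_vertex T hT (c0 := 11/18) (c1 := 5/18) (c2 := 2/18)
          (by norm_num) (by norm_num) (by norm_num) (by norm_num)
          (by simp [Triangle.child, Triangle.bary]; try module) q hv
    · exact absurd rfl hkl

lemma tri_ext {A B : Triangle} (h : A.v = B.v) : A = B := by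
  cases A; cases B; cases h; rfl

lemma special_congr (T T' u : Triangle) (hb : T'.bdry = T.bdry)
    (hr : Set.range T'.v = Set.range T.v) : SpecialWrt T u ↔ SpecialWrt T' u := by
  constructor
  · rintro ⟨⟨e, he, hsub⟩, i0, j0, hij0⟩
    refine ⟨⟨e, he, hb ▸ hsub⟩, i0, ?_⟩
    have hm : u.v i0 ∈ Set.range T'.v := hr ▸ ⟨j0, hij0.symm⟩
    obtain ⟨j', hj'⟩ := hm
    exact ⟨j', hj'.symm⟩
  · rintro ⟨⟨e, he, hsub⟩, i0, j0, hij0⟩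
    refine ⟨⟨e, he, hb ▸ hsub⟩, i0, ?_⟩
    have hm : u.v i0 ∈ Set.range T.v := hr ▸ ⟨j0, hij0.symm⟩
    obtain ⟨j', hj'⟩ := hm
    exact ⟨j', hj'.symm⟩

lemma transfer (T T' t0 : Triangle) (hT' : T'.Nondeg)
    (hb : T'.bdry = T.bdry) (hv : Set.range T'.v = Set.range T.v)
    (hc : t0 = T'.child 0 1) :
    ∃! u : Triangle, u ∈ BSub t0 ∧ SpecialWrt T u := by
  subst hc
  obtain ⟨u, hu, huniq⟩ := key T' hT'
  exact ⟨u, ⟨hu.1, (special_congr T T' u hb hv).mpr hu.2⟩,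
    fun y hy => huniq y ⟨hy.1, (special_congr T T' y hb hv).mp hy.2⟩⟩

/-- every child `t` of a nondegenerate triangle `T` has exactly one child
which is special with respect to `T`. -/
theorem stmt3 (T : Triangle) (hT : T.Nondeg) (t : Triangle) (ht : t ∈ BSub T) :
    ∃! u : Triangle, u ∈ BSub t ∧ SpecialWrt T u := by
  obtain ⟨i, j, hij, rfl⟩ := ht
  fin_cases i <;> fin_cases j
  · exact absurd rfl hij
  · exact key T hT
  · -- (0,2), σ = ![0,2,1]
    refine transfer T ⟨T.v ∘ ![0,2,1]⟩ _
      (hT.comp_embedding ⟨![0,2,1], by decide⟩) ?_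
      ((show Function.Surjective ![(0:Fin 3),2,1] by decide).range_comp T.v) ?_
    · show segment ℝ (T.v 0) (T.v 2) ∪ segment ℝ (T.v 2) (T.v 1) ∪ segment ℝ (T.v 0) (T.v 1)
        = T.bdry
      rw [segment_symm ℝ (T.v 2) (T.v 1)]
      unfold Triangle.bdry; ext x; simp only [Set.mem_union]; tauto
    · apply tri_ext; funext m; fin_cases m
      · rfl
      · rfl
      · show T.bary = Triangle.bary _
        simp only [Triangle.bary, Function.comp_apply, Matrix.cons_val_zero,
          Matrix.cons_val_one, Matrix.head_cons, Matrix.cons_val_two, Matrix.tail_cons]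
        module
  · -- (1,0), σ = ![1,0,2]
    refine transfer T ⟨T.v ∘ ![1,0,2]⟩ _
      (hT.comp_embedding ⟨![1,0,2], by decide⟩) ?_
      ((show Function.Surjective ![(1:Fin 3),0,2] by decide).range_comp T.v) ?_
    · show segment ℝ (T.v 1) (T.v 0) ∪ segment ℝ (T.v 0) (T.v 2) ∪ segment ℝ (T.v 1) (T.v 2)
        = T.bdry
      rw [segment_symm ℝ (T.v 1) (T.v 0)]
      unfold Triangle.bdry; ext x; simp only [Set.mem_union]; tauto
    · apply tri_ext; funext m; fin_cases m
      · rfl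
      · rfl
      · show T.bary = Triangle.bary _
        simp only [Triangle.bary, Function.comp_apply, Matrix.cons_val_zero,
          Matrix.cons_val_one, Matrix.head_cons, Matrix.cons_val_two, Matrix.tail_cons]
        module
  · exact absurd rfl hij
  · -- (1,2), σ = ![1,2,0]
    refine transfer T ⟨T.v ∘ ![1,2,0]⟩ _
      (hT.comp_embedding ⟨![1,2,0], by decide⟩) ?_
      ((show Function.Surjective ![(1:Fin 3),2,0] by decide).range_comp T.v) ?_
    · show segment ℝ (T.v 1) (T.v 2) ∪ segment ℝ (T.v 2) (T.v 0) ∪ segment ℝ (T.v 1) (T.v 0)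
        = T.bdry
      rw [segment_symm ℝ (T.v 2) (T.v 0), segment_symm ℝ (T.v 1) (T.v 0)]
      unfold Triangle.bdry; ext x; simp only [Set.mem_union]; tauto
    · apply tri_ext; funext m; fin_cases m
      · rfl
      · rfl
      · show T.bary = Triangle.bary _
        simp only [Triangle.bary, Function.comp_apply, Matrix.cons_val_zero,
          Matrix.cons_val_one, Matrix.head_cons, Matrix.cons_val_two, Matrix.tail_cons]
        module
  · -- (2,0), σ = ![2,0,1]
    refine transfer T ⟨T.v ∘ ![2,0,1]⟩ _
      (hT.comp_embedding ⟨![2,0,1], by decide⟩) ?_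
      ((show Function.Surjective ![(2:Fin 3),0,1] by decide).range_comp T.v) ?_
    · show segment ℝ (T.v 2) (T.v 0) ∪ segment ℝ (T.v 0) (T.v 1) ∪ segment ℝ (T.v 2) (T.v 1)
        = T.bdry
      rw [segment_symm ℝ (T.v 2) (T.v 0), segment_symm ℝ (T.v 2) (T.v 1)]
      unfold Triangle.bdry; ext x; simp only [Set.mem_union]; tauto
    · apply tri_ext; funext m; fin_cases m
      · rfl
      · rfl
      · show T.bary = Triangle.bary _
        simp only [Triangle.bary, Function.comp_apply, Matrix.cons_val_zero,
          Matrix.cons_val_one, Matrix.head_cons, Matrix.cons_val_two, Matrix.tail_cons]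
        module
  · -- (2,1), σ = ![2,1,0]
    refine transfer T ⟨T.v ∘ ![2,1,0]⟩ _
      (hT.comp_embedding ⟨![2,1,0], by decide⟩) ?_
      ((show Function.Surjective ![(2:Fin 3),1,0] by decide).range_comp T.v) ?_
    · show segment ℝ (T.v 2) (T.v 1) ∪ segment ℝ (T.v 1) (T.v 0) ∪ segment ℝ (T.v 2) (T.v 0)
        = T.bdry
      rw [segment_symm ℝ (T.v 2) (T.v 1), segment_symm ℝ (T.v 1) (T.v 0),
        segment_symm ℝ (T.v 2) (T.v 0)]
      unfold Triangle.bdry; ext x; simp only [Set.mem_union]; tauto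
    · apply tri_ext; funext m; fin_cases m
      · rfl
      · rfl
      · show T.bary = Triangle.bary _
        simp only [Triangle.bary, Function.comp_apply, Matrix.cons_val_zero,
          Matrix.cons_val_one, Matrix.head_cons, Matrix.cons_val_two, Matrix.tail_cons]
        module
  · exact absurd rfl hij
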